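/- arXiv:1803.06086 — 2 statements merged into one kernel-verified Lean document; each statement's English description precedes it below -/
import Mathlib

section
/- Let C be a semicategory. The following are equivalent: (1) every object a of C admits a two-sided identity e : a ⟶ a; (2) for every object a there exist an object b and a divisible morphism p : a ⟶ b; (3) for every object a there exist an object b and a divisible morphism p' : b ⟶ a. -/
/-- A semicategory: a quiver with an associative composition, no identities assumed. -/
structure Semicategory where
  Obj : Type*
  Hom : Obj → Obj → Type*
  comp : ∀ {a b c : Obj}, Hom a b → Hom b c → Hom a c
  assoc : ∀ {a b c d : Obj} (f : Hom a b) (g : Hom b c) (h : Hom c d),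
    comp (comp f g) h = comp f (comp g h)

/-- A morphism is divisible if pre- and post-composition with it are bijective. -/
def Semicategory.Divisible (C : Semicategory) {a b : C.Obj} (p : C.Hom a b) : Prop :=
  ∀ c : C.Obj, Function.Bijective (fun q : C.Hom b c => C.comp p q) ∧
    Function.Bijective (fun r : C.Hom c a => C.comp r p)

/-- A two-sided identity at an object. -/
def Semicategory.IsIdentity (C : Semicategory) {a : C.Obj} (e : C.Hom a a) : Prop :=
  (∀ (c : C.Obj) (q : C.Hom a c), C.comp e q = q) ∧
    (∀ (c : C.Obj) (r : C.Hom c a), C.comp r e = r)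

theorem units_iff_divisibles (C : Semicategory) :
    [(∀ a : C.Obj, ∃ e : C.Hom a a, C.IsIdentity e),
     (∀ a : C.Obj, ∃ (b : C.Obj) (p : C.Hom a b), C.Divisible p),
     (∀ a : C.Obj, ∃ (b : C.Obj) (p' : C.Hom b a), C.Divisible p')].TFAE := by

  tfae_have 1 → 2 := by
    intro h a
    obtain ⟨e, he1, he2⟩ := h a
    exact ⟨a, e, fun c => ⟨⟨fun x y hxy => by simpa [he1] using hxy,
      fun q => ⟨q, he1 c q⟩⟩, ⟨fun x y hxy => by simpa [he2] using hxy,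
      fun r => ⟨r, he2 c r⟩⟩⟩⟩
  tfae_have 1 → 3 := by
    intro h a
    obtain ⟨e, he1, he2⟩ := h a
    exact ⟨a, e, fun c => ⟨⟨fun x y hxy => by simpa [he1] using hxy,
      fun q => ⟨q, he1 c q⟩⟩, ⟨fun x y hxy => by simpa [he2] using hxy,
      fun r => ⟨r, he2 c r⟩⟩⟩⟩
  tfae_have 2 → 1 := by
    intro h a
    obtain ⟨b, p, hp⟩ := h a
    obtain ⟨e, he⟩ := (hp a).2.surjective p
    simp only at he
    refine ⟨e, fun c q => ?_, fun c r => ?_⟩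
    · obtain ⟨s, hs⟩ := (hp c).1.surjective q
      simp only at hs
      rw [← hs, ← C.assoc, he]
    · apply (hp c).2.injective
      show C.comp (C.comp r e) p = C.comp r p
      rw [C.assoc, he]
  tfae_have 3 → 1 := by
    intro h a
    obtain ⟨b, p, hp⟩ := h a
    obtain ⟨e, he⟩ := (hp a).1.surjective p
    simp only at he
    refine ⟨e, fun c q => ?_, fun c r => ?_⟩
    · apply (hp c).1.injective
      show C.comp p (C.comp e q) = C.comp p q
      rw [← C.assoc, he]
    · obtain ⟨s, hs⟩ := (hp c).2.surjective r
      simp only at hs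
      rw [← hs, C.assoc, he]
  tfae_finish
end

section
/- Saavedra-unit recognition: let C be a monoidal category and e an object equipped with an isomorphism α : e ⊗ e ≅ e, and suppose the functor e ⊗ − : C ⥤ C is fully faithful. Then for every object X there is an isomorphism e ⊗ X ≅ X; in particular e ≅ 𝟙_C. -/
open CategoryTheory MonoidalCategory

theorem saavedra_unit_iso_unit {C : Type*} [Category C] [MonoidalCategory C]
    (e : C) (α : e ⊗ e ≅ e)
    [(tensorLeft e).Full] [(tensorLeft e).Faithful] :
    (∀ X : C, Nonempty (e ⊗ X ≅ X)) ∧ Nonempty (e ≅ 𝟙_ C) := by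
  have β : ∀ X : C, e ⊗ X ≅ X := fun X =>
    (tensorLeft e).preimageIso ((α_ e e X).symm ≪≫ whiskerRightIso α X)
  exact ⟨fun X => ⟨β X⟩, ⟨(ρ_ e).symm ≪≫ β (𝟙_ C)⟩⟩
end
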